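/- For fixed reals b, B with 0 ≤ b, 0 ≤ B, b + B ≤ 1, the function F(θ) = (1/2)[H_{b+B}(θ) + H_{b−B}(θ) + H_{−b+B}(θ) + H_{−b−B}(θ)] − H_b(θ) − H_{−b}(θ) is monotonically increasing for θ ∈ [0, 1−b−B], where H_ε(x) = (1/2)[(1+ε+x)log₂(1+ε+x) + (1+ε−x)log₂(1+ε−x)]. -/

import Mathlib

open Real

noncomputable def Hent (ε x : ℝ) : ℝ :=
  (1/2) * ((1 + ε + x) * Real.logb 2 (1 + ε + x) + (1 + ε - x) * Real.logb 2 (1 + ε - x))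

noncomputable def gaux (ε θ : ℝ) : ℝ :=
  (1 + ε + θ) * Real.log (1 + ε + θ) + (1 + ε - θ) * Real.log (1 + ε - θ)

lemma gaux_continuous (ε : ℝ) : Continuous (fun θ : ℝ => gaux ε θ) := by
  have h1 : Continuous fun θ : ℝ => (1 + ε + θ) * Real.log (1 + ε + θ) :=
    Real.continuous_mul_log.comp (continuous_const.add continuous_id)
  have h2 : Continuous fun θ : ℝ => (1 + ε - θ) * Real.log (1 + ε - θ) :=
    Real.continuous_mul_log.comp (continuous_const.sub continuous_id)
  exact h1.add h2

lemma gaux_hasDeriv (ε θ p q : ℝ) (hp : p = 1 + ε + θ) (hq : q = 1 + ε - θ)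
    (h1 : p ≠ 0) (h2 : q ≠ 0) :
    HasDerivAt (fun t => gaux ε t) (Real.log p - Real.log q) θ := by
  subst hp hq
  have ha : HasDerivAt (fun t : ℝ => 1 + ε + t) 1 θ := by
    simpa using (hasDerivAt_id θ).const_add (1 + ε)
  have hb : HasDerivAt (fun t : ℝ => 1 + ε - t) (-1) θ := by
    simpa using (hasDerivAt_id θ).const_sub (1 + ε)
  have h1' := (Real.hasDerivAt_mul_log h1).comp θ ha
  have h2' := (Real.hasDerivAt_mul_log h2).comp θ hb
  have h := h1'.add h2'
  exact h.congr_deriv (by ring)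

lemma key_ineq (a c B : ℝ) (hB : 0 ≤ B) (hcB : 0 < c - B) (hca : c ≤ a) :
    Real.log (c + B) + Real.log (c - B) + 2 * Real.log a
      ≤ Real.log (a + B) + Real.log (a - B) + 2 * Real.log c := by
  have hc : 0 < c := by linarith
  have ha : 0 < a := by linarith
  have h1 : 0 < c + B := by linarith
  have h2 : 0 < a + B := by linarith
  have h3 : 0 < a - B := by linarith
  have L1 : Real.log (c + B) + Real.log (c - B) + 2 * Real.log a
      = Real.log ((c + B) * (c - B) * (a * a)) := by
    rw [Real.log_mul (mul_ne_zero h1.ne' hcB.ne') (mul_ne_zero ha.ne' ha.ne'),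
      Real.log_mul h1.ne' hcB.ne', Real.log_mul ha.ne' ha.ne']
    ring
  have L2 : Real.log (a + B) + Real.log (a - B) + 2 * Real.log c
      = Real.log ((a + B) * (a - B) * (c * c)) := by
    rw [Real.log_mul (mul_ne_zero h2.ne' h3.ne') (mul_ne_zero hc.ne' hc.ne'),
      Real.log_mul h2.ne' h3.ne', Real.log_mul hc.ne' hc.ne']
    ring
  rw [L1, L2]
  apply Real.log_le_log (by positivity)
  nlinarith [mul_nonneg (mul_nonneg hB hB) (mul_nonneg (by linarith : (0:ℝ) ≤ a - c)
    (by linarith : (0:ℝ) ≤ a + c))]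

theorem F_monotone_case1 (b B : ℝ) (hb : 0 ≤ b) (hB : 0 ≤ B) (hbB : b + B ≤ 1) :
    MonotoneOn (fun θ : ℝ =>
      (1/2) * (Hent (b + B) θ + Hent (b - B) θ + Hent (-b + B) θ + Hent (-b - B) θ)
        - Hent b θ - Hent (-b) θ) (Set.Icc 0 (1 - b - B)) := by
  have hlog2 : (0:ℝ) ≤ (Real.log 2)⁻¹ := inv_nonneg.2 (Real.log_nonneg one_le_two)
  set G : ℝ → ℝ := fun θ =>
    (1/4) * (gaux (b + B) θ + gaux (b - B) θ + gaux (-b + B) θ + gaux (-b - B) θ)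
      - (1/2) * gaux b θ - (1/2) * gaux (-b) θ with hGdef
  have hfG : ∀ θ : ℝ, ((1/2) * (Hent (b + B) θ + Hent (b - B) θ + Hent (-b + B) θ
        + Hent (-b - B) θ) - Hent b θ - Hent (-b) θ) = (Real.log 2)⁻¹ * G θ := by
    intro θ
    simp only [hGdef, Hent, gaux, Real.logb, div_eq_inv_mul]
    ring
  have hGmono : MonotoneOn G (Set.Icc 0 (1 - b - B)) := by
    apply monotoneOn_of_hasDerivWithinAt_nonneg (convex_Icc _ _)
      (f' := fun θ => (1/4) * ((Real.log (1 + b + θ + B) - Real.log (1 + b - θ + B))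
        + (Real.log (1 + b + θ - B) - Real.log (1 + b - θ - B))
        + (Real.log (1 - b + θ + B) - Real.log (1 - b - θ + B))
        + (Real.log (1 - b + θ - B) - Real.log (1 - b - θ - B)))
        - (1/2) * (Real.log (1 + b + θ) - Real.log (1 + b - θ))
        - (1/2) * (Real.log (1 - b + θ) - Real.log (1 - b - θ)))
    · exact ((continuous_const.mul ((((gaux_continuous (b+B)).add (gaux_continuous (b-B))).add
        (gaux_continuous (-b+B))).add (gaux_continuous (-b-B)))).sub
        (continuous_const.mul (gaux_continuous b)) |>.sub
        (continuous_const.mul (gaux_continuous (-b)))).continuousOn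
    · intro θ hθ
      rw [interior_Icc] at hθ
      obtain ⟨h0, h1⟩ := hθ
      have A1 := gaux_hasDeriv (b+B) θ (1 + b + θ + B) (1 + b - θ + B) (by ring) (by ring)
        (by positivity) (by nlinarith)
      have A2 := gaux_hasDeriv (b-B) θ (1 + b + θ - B) (1 + b - θ - B) (by ring) (by ring)
        (by nlinarith) (by nlinarith)
      have A3 := gaux_hasDeriv (-b+B) θ (1 - b + θ + B) (1 - b - θ + B) (by ring) (by ring)
        (by nlinarith) (by nlinarith)
      have A4 := gaux_hasDeriv (-b-B) θ (1 - b + θ - B) (1 - b - θ - B) (by ring) (by ring)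
        (by nlinarith) (by nlinarith)
      have A5 := gaux_hasDeriv b θ (1 + b + θ) (1 + b - θ) (by ring) (by ring)
        (by positivity) (by nlinarith)
      have A6 := gaux_hasDeriv (-b) θ (1 - b + θ) (1 - b - θ) (by ring) (by ring)
        (by nlinarith) (by nlinarith)
      exact (((((A1.add A2).add A3).add A4).const_mul (1/4)).sub
        (A5.const_mul (1/2)) |>.sub (A6.const_mul (1/2))).hasDerivWithinAt
    · intro θ hθ
      rw [interior_Icc] at hθ
      obtain ⟨h0, h1⟩ := hθ
      have k1 := key_ineq (1 + b + θ) (1 + b - θ) B hB (by nlinarith) (by linarith)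
      have k2 := key_ineq (1 - b + θ) (1 - b - θ) B hB (by nlinarith) (by linarith)
      have e1 : (1:ℝ) + b - θ + B = 1 + b - θ + B := by ring
      linarith
  intro x hx y hy hxy
  dsimp only
  rw [hfG x, hfG y]
  exact mul_le_mul_of_nonneg_left (hGmono hx hy hxy) hlog2
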